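/- arXiv:0704.0202 — 3 statements merged into one kernel-verified Lean document; each statement's English description precedes it below -/
import Mathlib

section
/- Let n be a real unit vector in ℝ³ and let R_n(α) = cos(α/2)·I - i·sin(α/2)·(n·σ) be the corresponding rotation matrix in M₂(ℂ). If θ is a real number such that θ/π is irrational, then for every real α and every ε > 0 there exists a natural number k such that ‖R_n(α) - R_n(θ)^k‖ < ε (operator norm on M₂(ℂ)). -/
open Matrix Complex
open scoped Real Matrix.Norms.L2Operator

noncomputable section

/-- The Pauli matrix σx. -/
def σx : Matrix (Fin 2) (Fin 2) ℂ := !![0, 1; 1, 0]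

/-- The Pauli matrix σy. -/
def σy : Matrix (Fin 2) (Fin 2) ℂ := !![0, -Complex.I; Complex.I, 0]

/-- The Pauli matrix σz. -/
def σz : Matrix (Fin 2) (Fin 2) ℂ := !![1, 0; 0, -1]

/-- `n·σ = a·σx + b·σy + c·σz` for a real vector `n = (a, b, c)`. -/
def dotσ (n : Fin 3 → ℝ) : Matrix (Fin 2) (Fin 2) ℂ :=
  (n 0 : ℂ) • σx + (n 1 : ℂ) • σy + (n 2 : ℂ) • σz

/-- The rotation `R_n(α) = cos(α/2)·I - i·sin(α/2)·(n·σ)`. -/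
def Rot (n : Fin 3 → ℝ) (α : ℝ) : Matrix (Fin 2) (Fin 2) ℂ :=
  (Real.cos (α / 2) : ℂ) • (1 : Matrix (Fin 2) (Fin 2) ℂ)
    - (Complex.I * (Real.sin (α / 2) : ℂ)) • dotσ n


/-! Since `(n·σ)² = 1`, `α ↦ R_n(α)` is a continuous, `4π`-periodic one-parameter group, so
`R_n(θ)^k = R_n(kθ)`. As `θ / 4π` is irrational, the natural multiples of `θ` are dense modulo
`4π`, and continuity of `R_n` carries this density over to the powers `R_n(θ)^k`. -/

theorem Function.Periodic.mem_closure_range_natCast_mul {X : Type*} [TopologicalSpace X]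
    {f : ℝ → X} {p θ : ℝ} (hf : Continuous f) (hfp : Function.Periodic f p) (hp : 0 < p)
    (hθ : Irrational (θ / p)) (α : ℝ) :
    f α ∈ closure (Set.range fun k : ℕ ↦ f (k * θ)) := by
  have : Fact (0 < p) := ⟨hp⟩
  -- in the compact group `ℝ/pℤ` the `ℕ`-multiples have the same closure as the `ℤ`-multiples
  have hdense : DenseRange (· • (θ : AddCircle p) : ℕ → AddCircle p) :=
    denseRange_zsmul_iff_nsmul.1 (AddCircle.denseRange_zsmul_coe_iff.2 hθ)
  have hlift : Continuous (hfp.lift : AddCircle p → X) := continuous_quot_lift _ hf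
  have := map_mem_closure hlift (hdense (α : AddCircle p)) (t := Set.range fun k : ℕ ↦ f (k * θ))
    (Set.forall_mem_range.2 fun k ↦ ⟨k, by rw [← AddCircle.coe_nsmul, nsmul_eq_mul]; rfl⟩)
  rwa [hfp.lift_coe] at this

lemma dotσ_mul_self {n : Fin 3 → ℝ} (hn : n 0 ^ 2 + n 1 ^ 2 + n 2 ^ 2 = 1) :
    dotσ n * dotσ n = 1 := by
  have h : (n 0 : ℂ) ^ 2 + (n 1 : ℂ) ^ 2 + (n 2 : ℂ) ^ 2 = 1 := by exact_mod_cast hn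
  ext i j
  fin_cases i <;> fin_cases j <;>
    simp [dotσ, σx, σy, σz, Matrix.mul_apply, Fin.sum_univ_two] <;>
    first
      | linear_combination h - (n 1 : ℂ) ^ 2 * Complex.I_sq
      | ring

lemma Rot_add {n : Fin 3 → ℝ} (hn : n 0 ^ 2 + n 1 ^ 2 + n 2 ^ 2 = 1) (α β : ℝ) :
    Rot n α * Rot n β = Rot n (α + β) := by
  simp only [Rot, add_div, Real.cos_add, Real.sin_add, sub_mul, mul_sub, smul_mul_smul_comm,
    one_mul, mul_one, dotσ_mul_self hn]
  push_cast
  match_scalars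
  · linear_combination Complex.sin (α / 2) * Complex.sin (β / 2) * Complex.I_sq
  · ring

lemma Rot_pow {n : Fin 3 → ℝ} (hn : n 0 ^ 2 + n 1 ^ 2 + n 2 ^ 2 = 1) (θ : ℝ) (k : ℕ) :
    Rot n θ ^ k = Rot n (k * θ) := by
  induction k with
  | zero => simp [Rot]
  | succ k ih => rw [pow_succ, ih, Rot_add hn]; push_cast; ring_nf

lemma Rot_periodic (n : Fin 3 → ℝ) : Function.Periodic (Rot n) (4 * π) := by
  intro α
  simp only [Rot, show (α + 4 * π) / 2 = α / 2 + 2 * π by ring, Real.cos_add_two_pi,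
    Real.sin_add_two_pi]

lemma continuous_Rot (n : Fin 3 → ℝ) : Continuous (Rot n) := by
  unfold Rot
  fun_prop

theorem rotation_irrational_approx (n : Fin 3 → ℝ)
    (hn : n 0 ^ 2 + n 1 ^ 2 + n 2 ^ 2 = 1)
    (θ : ℝ) (hθ : Irrational (θ / π)) :
    ∀ α : ℝ, ∀ ε : ℝ, 0 < ε → ∃ k : ℕ, ‖Rot n α - (Rot n θ) ^ k‖ < ε := by
  intro α ε hε
  have hθ' : Irrational (θ / (4 * π)) := by
    simpa [div_div, mul_comm] using hθ.div_natCast (m := 4) four_ne_zero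
  have hclosure := (Rot_periodic n).mem_closure_range_natCast_mul (continuous_Rot n)
    (by positivity) hθ' α
  obtain ⟨k, hk⟩ := Metric.mem_closure_range_iff.1 hclosure ε hε
  exact ⟨k, by rwa [Rot_pow hn, ← dist_eq_norm]⟩
end
end

section
/- (Włodarski) Let α, β be real numbers such that α is not an integer multiple of π/4 and cos β = cos²α. Then α/π is irrational or β/π is irrational. -/
open scoped Real

/-!
If `α = aπ` and `β = bπ` with `a, b` rational, then `x = cos 2α = 2 cos β - 1` is an algebraic
integer, because `2 cos β` is. As `x` is the real part of the root of unity `e^{2iα}`, all its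
conjugates lie in the closed unit disc, so by Kronecker's theorem `x = 0` or `x` is a real root of
unity, i.e. `x = ±1`. Either way `sin 4α = 2 sin 2α cos 2α = 0`, so `α` is a multiple of `π/4`.
-/

open IntermediateField in
theorem Complex.exists_pow_eq_one_of_isIntegral_of_eq_half_add_inv {ζ x : ℂ} {n : ℕ}
    (hn : n ≠ 0) (hζ : ζ ^ n = 1) (hx : IsIntegral ℤ x) (hx₀ : x ≠ 0)
    (hxζ : x = (ζ + ζ⁻¹) / 2) : ∃ m > 0, x ^ m = 1 := by
  have hζint : IsIntegral ℚ ζ := .of_pow (Nat.pos_of_ne_zero hn) (hζ ▸ isIntegral_one)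
  let K := ℚ⟮ζ⟯
  have : FiniteDimensional ℚ K := adjoin.finiteDimensional hζint
  have : NumberField K := ⟨⟩
  let ζK : K := ⟨ζ, mem_adjoin_simple_self ℚ ζ⟩
  let xK : K := (ζK + ζK⁻¹) / 2
  have hxK : algebraMap K ℂ xK = x := by
    rw [hxζ, map_div₀, map_add, map_inv₀, map_ofNat]; rfl
  have hxKint : IsIntegral ℤ xK :=
    (isIntegral_algebraMap_iff (algebraMap K ℂ).injective).mp (hxK ▸ hx)
  have hconj (φ : K →+* ℂ) : ‖φ xK‖ ≤ 1 := by
    have hφζ : ‖φ ζK‖ = 1 := Complex.norm_eq_one_of_pow_eq_one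
      (by rw [← map_pow, show ζK ^ n = 1 from Subtype.ext (by simpa using hζ), map_one]) hn
    calc ‖φ xK‖ = ‖φ ζK + (φ ζK)⁻¹‖ / 2 := by
          rw [map_div₀, map_add, map_inv₀, map_ofNat, norm_div, Complex.norm_two]
      _ ≤ (‖φ ζK‖ + ‖(φ ζK)⁻¹‖) / 2 := by gcongr; exact norm_add_le _ _
      _ = 1 := by rw [norm_inv, hφζ]; norm_num
  obtain ⟨m, hm, hxm⟩ := NumberField.Embeddings.pow_eq_one_of_norm_le_one K ℂ
    (fun h ↦ hx₀ (by rw [← hxK, h, map_zero])) hxKint hconj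
  exact ⟨m, hm, by rw [← hxK, ← map_pow, hxm, map_one]⟩

theorem Real.cos_rat_mul_pi_eq_zero_or_abs_eq_one {q : ℚ} (h : IsIntegral ℤ (cos (q * π))) :
    cos (q * π) = 0 ∨ |cos (q * π)| = 1 := by
  refine or_iff_not_imp_left.mpr fun h₀ ↦ ?_
  have hcos : (cos (q * π) : ℂ) = (Complex.exp (q * π * Complex.I) +
      (Complex.exp (q * π * Complex.I))⁻¹) / 2 := by
    rw [Complex.ofReal_cos, Complex.cos, ← Complex.exp_neg]; push_cast; ring_nf
  obtain ⟨m, hm, hxm⟩ := Complex.exists_pow_eq_one_of_isIntegral_of_eq_half_add_inv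
    (x := cos (q * π)) (by positivity) (Complex.exp_rat_mul_pi_mul_I_pow_two_mul_den q)
    ((isIntegral_algebraMap_iff Complex.ofReal_injective).mpr h) (by exact_mod_cast h₀) hcos
  have hpow : cos (q * π) ^ m = 1 := by exact_mod_cast hxm
  exact (pow_eq_one_iff_of_nonneg (abs_nonneg _) hm.ne').mp (by rw [pow_abs, hpow, abs_one])

/-- Włodarski's lemma: if `α` is not an integer multiple of `π/4` and
`cos β = cos² α`, then `α` or `β` is an irrational multiple of `π`. -/
theorem wlodarski (α β : ℝ) (hα : ¬ ∃ k : ℤ, α = k * (π / 4))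
    (hβ : Real.cos β = (Real.cos α) ^ 2) :
    Irrational (α / π) ∨ Irrational (β / π) := by
  by_contra! h
  simp only [Irrational, not_not] at h
  obtain ⟨⟨a, ha⟩, ⟨b, hb⟩⟩ := h
  replace ha : α = a * π := by rw [ha, div_mul_cancel₀ _ Real.pi_ne_zero]
  replace hb : β = b * π := by rw [hb, div_mul_cancel₀ _ Real.pi_ne_zero]
  have h2α : ((2 * a : ℚ) * π : ℝ) = 2 * α := by push_cast; rw [ha]; ring
  have hint : IsIntegral ℤ (Real.cos ((2 * a : ℚ) * π)) := by
    rw [h2α, Real.cos_two_mul, ← hβ, hb]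
    exact (Real.isIntegral_two_mul_cos_rat_mul_pi b).sub isIntegral_one
  have hcos := Real.cos_rat_mul_pi_eq_zero_or_abs_eq_one hint
  rw [h2α] at hcos
  have hsin : Real.sin (2 * (2 * α)) = 0 := by
    rw [Real.sin_two_mul]
    rcases hcos with h0 | h1
    · rw [h0, mul_zero]
    · rw [Real.sin_eq_zero_iff_cos_eq.mpr ((abs_eq zero_le_one).mp h1), mul_zero, zero_mul]
  obtain ⟨k, hk⟩ := Real.sin_eq_zero_iff.mp hsin
  exact hα ⟨k, by linarith⟩
end

section
/- Let θ be a real number with cos(θ/2) = cos²(π/8), i.e., θ = 2·arccos(cos²(π/8)). Then θ/π is irrational. -/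
open scoped Real

/-- If `cos(θ/2) = cos²(π/8)`, i.e. `θ = 2·arccos(cos²(π/8))`,
then `θ/π` is irrational. -/
theorem theta_irrational_multiple_of_pi (θ : ℝ)
    (hθ : Real.cos (θ / 2) = (Real.cos (π / 8)) ^ 2) :
    Irrational (θ / π) := by
  have hcos : Real.cos (θ / 2) = 1 / 2 + Real.sqrt 2 / 4 := by
    rw [hθ, Real.cos_sq]
    rw [show 2 * (π / 8) = π / 4 by ring, Real.cos_pi_div_four]
    ring
  rintro ⟨q, hq⟩
  have hπ : (π : ℝ) ≠ 0 := Real.pi_ne_zero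
  have hθq : θ = q * π := by field_simp at hq; linarith [hq]
  set z : ℂ := Complex.exp (θ / 2 * Complex.I) with hz
  have hn : (4 * q.den : ℕ) ≠ 0 := by positivity
  have hzn : z ^ (4 * q.den) = 1 := by
    rw [hz, ← Complex.exp_nat_mul]
    have hden : ((q.den : ℂ)) * (q : ℂ) = (q.num : ℂ) := by
      rw [mul_comm]; exact_mod_cast Rat.mul_den_eq_num q
    have hθc : (θ : ℂ) = (q : ℂ) * (π : ℂ) := by
      rw [hθq]; push_cast; ring
    have key : ((4 * q.den : ℕ) : ℂ) * ((θ : ℂ) / 2 * Complex.I) = (q.num : ℤ) * (2 * π * Complex.I) := by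
      rw [hθc]; push_cast
      linear_combination 2 * (π : ℂ) * Complex.I * hden
    rw [key, Complex.exp_int_mul_two_pi_mul_I]
  have hz0 : z ≠ 0 := Complex.exp_ne_zero _
  have hiz : IsIntegral ℤ z := by
    refine ⟨Polynomial.X ^ (4 * q.den) - 1, ?_, ?_⟩
    · simpa using Polynomial.monic_X_pow_sub_C (1 : ℤ) hn
    · simp [hzn]
  have hinveq : z⁻¹ = z ^ (4 * q.den - 1) := by
    apply inv_eq_of_mul_eq_one_right
    rw [← pow_succ', Nat.sub_add_cancel (Nat.one_le_iff_ne_zero.mpr hn), hzn]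
  have hinv : IsIntegral ℤ z⁻¹ := hinveq ▸ hiz.pow _
  have h2cos : IsIntegral ℤ (2 * Complex.cos ((θ : ℂ) / 2)) := by
    rw [Complex.two_cos]
    have h1 : Complex.exp ((θ : ℂ) / 2 * Complex.I) = z := rfl
    have h2 : Complex.exp (-((θ : ℂ) / 2) * Complex.I) = z⁻¹ := by
      rw [hz, ← Complex.exp_neg]; ring_nf
    rw [h1, h2]
    exact hiz.add hinv
  have hs : IsIntegral ℤ ((Real.sqrt 2 / 2 : ℝ) : ℂ) := by
    have hc : Complex.cos ((θ : ℂ) / 2) = ((Real.cos (θ / 2) : ℝ) : ℂ) := by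
      rw [Complex.ofReal_cos]; push_cast; ring_nf
    have : ((Real.sqrt 2 / 2 : ℝ) : ℂ) = 2 * Complex.cos ((θ : ℂ) / 2) - 1 := by
      rw [hc, hcos]; push_cast; ring
    rw [this]
    exact h2cos.sub isIntegral_one
  have hhalf : IsIntegral ℤ (((1 / 2 : ℚ) : ℂ)) := by
    have h2 : (((1 / 2 : ℚ) : ℂ)) = ((Real.sqrt 2 / 2 : ℝ) : ℂ) ^ 2 := by
      have : Real.sqrt 2 ^ 2 = 2 := Real.sq_sqrt (by norm_num)
      push_cast
      rw [div_pow]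
      rw [show ((Real.sqrt 2 : ℂ)) ^ 2 = ((Real.sqrt 2 ^ 2 : ℝ) : ℂ) by push_cast; ring, this]
      norm_num
    rw [h2]
    exact hs.pow 2
  have hQ : IsIntegral ℤ ((1 / 2 : ℚ)) := by
    have h : IsIntegral ℤ (algebraMap ℚ ℂ (1 / 2 : ℚ)) := hhalf
    exact (isIntegral_algebraMap_iff (algebraMap ℚ ℂ).injective).mp h
  obtain ⟨m, hm⟩ := IsIntegrallyClosed.isIntegral_iff.mp hQ
  have : (m : ℚ) = 1 / 2 := hm
  have h2m : (2 * m : ℚ) = 1 := by rw [this]; norm_num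
  have : (2 * m : ℤ) = 1 := by exact_mod_cast h2m
  omega
end
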